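/- arXiv:2408.09821 — 2 statements merged into one kernel-verified Lean document; each statement's English description precedes it below -/
import Mathlib

section
/- Let C ∈ ℝ^{n×2n} satisfy CJCᵀ = 0, and let K : ℝⁿ → ℝ be continuously differentiable. Then the Hamiltonian vector field f(x) = JCᵀ∇K(Cx) satisfies f applied twice gives zero in the sense that the derivative of f along its own flow vanishes: (Df)(x) · f(x) = 0 for all x; equivalently, J∇²H(x)J∇H(x) = 0 where H(x) = K(Cx). -/
/-!
Isotropy `C J Cᵀ = 0` says that `C` annihilates the range of `J Cᵀ`, so `C f(x) = 0`.
Both `f` and `∇²H = Cᵀ (∇²K) C` see their argument only through `C`, hence both vanish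
in the direction `f(x) = J ∇H(x)`.
-/

open Matrix

theorem mulVec_mulVec_mulVec_eq_zero {R l m n o : Type*} [NonUnitalSemiring R]
    [Fintype m] [Fintype n] [Fintype o] {C : Matrix l m R} {A : Matrix m n R}
    {D : Matrix n o R} (h : C * A * D = 0) (v : o → R) :
    C *ᵥ (A *ᵥ (D *ᵥ v)) = 0 := by
  rw [mulVec_mulVec, mulVec_mulVec, h, zero_mulVec]

theorem fderiv_mulVec_comp_mulVec {𝕜 l m n p : Type*} [NontriviallyNormedField 𝕜]
    [CompleteSpace 𝕜] [Fintype l] [Fintype m] [Fintype n] [Fintype p]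
    (A : Matrix l m 𝕜) (C : Matrix n p 𝕜) (g : (n → 𝕜) → m → 𝕜) (x v : p → 𝕜)
    (hg : DifferentiableAt 𝕜 g (C *ᵥ x)) :
    fderiv 𝕜 (fun x ↦ A *ᵥ g (C *ᵥ x)) x v = A *ᵥ fderiv 𝕜 g (C *ᵥ x) (C *ᵥ v) := by
  let LA := LinearMap.toContinuousLinearMap (mulVecLin A)
  let LC := LinearMap.toContinuousLinearMap (mulVecLin C)
  have h : HasFDerivAt (fun x ↦ A *ᵥ g (C *ᵥ x)) (LA.comp ((fderiv 𝕜 g (C *ᵥ x)).comp LC)) x :=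
    LA.hasFDerivAt.comp x (hg.hasFDerivAt.comp x LC.hasFDerivAt)
  rw [h.fderiv]
  rfl

theorem shear_field_nilpotent_general (n : ℕ)
    (C : Matrix (Fin n) (Fin n ⊕ Fin n) ℝ)
    (hC : C * Matrix.J (Fin n) ℝ * Cᵀ = 0)
    (gradK : (Fin n → ℝ) → Fin n → ℝ)
    (HK : (Fin n → ℝ) → Matrix (Fin n) (Fin n) ℝ)
    (hgradK : Differentiable ℝ gradK)
    (f : (Fin n ⊕ Fin n → ℝ) → Fin n ⊕ Fin n → ℝ)
    (hf : ∀ x, f x = Matrix.J (Fin n) ℝ *ᵥ (Cᵀ *ᵥ gradK (C *ᵥ x))) :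
    ∀ x, fderiv ℝ f x (f x) = 0 ∧
      (Matrix.J (Fin n) ℝ * (Cᵀ * HK (C *ᵥ x) * C)) *ᵥ
        (Matrix.J (Fin n) ℝ *ᵥ (Cᵀ *ᵥ gradK (C *ᵥ x))) = 0 := by
  intro x
  have hCf : C *ᵥ f x = 0 := hf x ▸ mulVec_mulVec_mulVec_eq_zero hC _
  have hf_comp : f = fun x ↦ (J (Fin n) ℝ * Cᵀ) *ᵥ gradK (C *ᵥ x) :=
    funext fun x ↦ by rw [hf, mulVec_mulVec]
  have hDf := fderiv_mulVec_comp_mulVec (J (Fin n) ℝ * Cᵀ) C gradK x (f x) (hgradK _)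
  rw [← hf_comp] at hDf
  refine ⟨?_, ?_⟩
  · rw [hDf, hCf, map_zero, mulVec_zero]
  · rw [← hf x, ← mulVec_mulVec, ← mulVec_mulVec, hCf, mulVec_zero, mulVec_zero]

/-- Let `C ∈ ℝ^{n×2n}` satisfy `CJCᵀ = 0` and let `K : ℝⁿ → ℝ` be
continuously differentiable (with gradient `gradK` and Hessian `HK`).  Then the
Hamiltonian vector field `f(x) = JCᵀ∇K(Cx)` satisfies `(Df)(x) · f(x) = 0` for
all `x`; equivalently `J ∇²H(x) J ∇H(x) = 0` where `H(x) = K(Cx)`,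
`∇H(x) = Cᵀ gradK(Cx)` and `∇²H(x) = Cᵀ HK(Cx) C`. -/
theorem shear_field_nilpotent (n : ℕ)
    (C : Matrix (Fin n) (Fin n ⊕ Fin n) ℝ)
    (hC : C * Matrix.J (Fin n) ℝ * Cᵀ = 0)
    (K : (Fin n → ℝ) → ℝ) (gradK : (Fin n → ℝ) → Fin n → ℝ)
    (HK : (Fin n → ℝ) → Matrix (Fin n) (Fin n) ℝ)
    (hK : Differentiable ℝ K)
    (hgrad : ∀ y v, fderiv ℝ K y v = gradK y ⬝ᵥ v)
    (hgradK : Differentiable ℝ gradK)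
    (hHess : ∀ y v, fderiv ℝ gradK y v = HK y *ᵥ v)
    (hgradcont : Continuous gradK)
    (f : (Fin n ⊕ Fin n → ℝ) → Fin n ⊕ Fin n → ℝ)
    (hf : ∀ x, f x = Matrix.J (Fin n) ℝ *ᵥ (Cᵀ *ᵥ gradK (C *ᵥ x))) :
    ∀ x, fderiv ℝ f x (f x) = 0 ∧
      (Matrix.J (Fin n) ℝ * (Cᵀ * HK (C *ᵥ x) * C)) *ᵥ
        (Matrix.J (Fin n) ℝ *ᵥ (Cᵀ *ᵥ gradK (C *ᵥ x))) = 0 :=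
  shear_field_nilpotent_general n C hC gradK HK hgradK f hf
end

section
/- Let w ∈ ℝ^{2n} and let α : ℝ → ℝ be continuously differentiable. Then the map φ(x) = x + h·α'(wᵀx)·Jw is symplectic, i.e., its Jacobian satisfies (Dφ)ᵀ J (Dφ) = J everywhere. -/
/-!
With `u = J w`, the Jacobian of `x ↦ x + g(wᵀx) u` is the shear `A = 1 + c u wᵀ`, `c = g'(wᵀx)`.
Since `JᵀJ = 1` and `J² = -1`, one gets `AᵀJ = J + c w wᵀ` and `J A = J - c w wᵀ`, so
`AᵀJA = J + c² (wᵀJw) w wᵀ`, and `wᵀJw = 0` because `J` is skew-symmetric.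
-/

open Matrix

namespace Matrix

variable {l R : Type*} [Fintype l] [DecidableEq l] [CommRing R]

theorem dotProduct_J_mulVec_self (w : l ⊕ l → R) : w ⬝ᵥ (J l R *ᵥ w) = 0 := by
  simp [J, fromBlocks_mulVec, dotProduct, Fintype.sum_sum_type, neg_mulVec, mul_comm]

theorem J_mulVec_J_mulVec (w : l ⊕ l → R) : J l R *ᵥ (J l R *ᵥ w) = -w := by
  rw [mulVec_mulVec, J_squared, neg_mulVec, one_mulVec]

theorem transpose_mul_J_mul_shear (w : l ⊕ l → R) (c : R) :
    (1 + c • vecMulVec (J l R *ᵥ w) w)ᵀ * J l R * (1 + c • vecMulVec (J l R *ᵥ w) w) =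
      J l R := by
  have hJw_vecMul_J : (J l R *ᵥ w) ᵥ* J l R = w := by
    rw [← mulVec_transpose, J_transpose, neg_mulVec, J_mulVec_J_mulVec, neg_neg]
  calc _ = (J l R + c • vecMulVec w w) * (1 + c • vecMulVec (J l R *ᵥ w) w) := by
        rw [transpose_add, transpose_one, transpose_smul, transpose_vecMulVec, add_mul, one_mul,
          smul_mul_assoc, vecMulVec_mul, hJw_vecMul_J]
    _ = J l R := by
        rw [add_mul, mul_add, mul_add, mul_one, mul_one, mul_smul_comm, mul_vecMulVec,
          J_mulVec_J_mulVec, smul_mul_smul, vecMulVec_mul_vecMulVec, dotProduct_J_mulVec_self,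
          zero_smul, vecMulVec_zero, smul_zero, neg_vecMulVec]
        module

end Matrix

section RidgeShear

variable {𝕜 ι : Type*} [NontriviallyNormedField 𝕜] [CompleteSpace 𝕜] [Fintype ι] [DecidableEq ι]

theorem hasFDerivAt_add_smul_ridge {g : 𝕜 → 𝕜} {g' : 𝕜} (w v x : ι → 𝕜)
    (hg : HasDerivAt g g' (w ⬝ᵥ x)) :
    HasFDerivAt (fun y => y + g (w ⬝ᵥ y) • v)
      (LinearMap.toContinuousLinearMap (toLin' (1 + g' • vecMulVec v w))) x := by
  have hw : HasFDerivAt (w ⬝ᵥ ·) (LinearMap.toContinuousLinearMap (dotProductBilin 𝕜 𝕜 w)) x :=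
    (LinearMap.toContinuousLinearMap (dotProductBilin 𝕜 𝕜 w)).hasFDerivAt
  refine ((hasFDerivAt_id x).add ((hg.comp_hasFDerivAt x hw).smul_const v)).congr_fderiv ?_
  ext y i
  simp [vecMulVec_mulVec, mul_assoc]

theorem toMatrix'_fderiv_of_hasFDerivAt {f : (ι → 𝕜) → ι → 𝕜} {M : Matrix ι ι 𝕜} {x : ι → 𝕜}
    (hf : HasFDerivAt f (LinearMap.toContinuousLinearMap (toLin' M)) x) :
    LinearMap.toMatrix' (fderiv 𝕜 f x : (ι → 𝕜) →ₗ[𝕜] ι → 𝕜) = M := by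
  rw [hf.fderiv, LinearMap.coe_toContinuousLinearMap, LinearMap.toMatrix'_toLin']

end RidgeShear

/-- Let `w ∈ ℝ^{2n}` and `α : ℝ → ℝ` be (twice) continuously
differentiable.  Then the ridge-shear map `φ(x) = x + h α'(wᵀx) Jw` is
symplectic: its Jacobian `Dφ(x)` satisfies `(Dφ)ᵀ J (Dφ) = J` everywhere. -/
theorem ridge_shear_symplectic (n : ℕ) (h : ℝ) (w : Fin n ⊕ Fin n → ℝ)
    (α : ℝ → ℝ) (hα : ContDiff ℝ 2 α)
    (φ : (Fin n ⊕ Fin n → ℝ) → Fin n ⊕ Fin n → ℝ)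
    (hφ : ∀ x, φ x = x + (h * deriv α (w ⬝ᵥ x)) • (Matrix.J (Fin n) ℝ *ᵥ w)) :
    ∀ x, (LinearMap.toMatrix' ((fderiv ℝ φ x : (Fin n ⊕ Fin n → ℝ) →L[ℝ] Fin n ⊕ Fin n → ℝ) :
            (Fin n ⊕ Fin n → ℝ) →ₗ[ℝ] Fin n ⊕ Fin n → ℝ))ᵀ * Matrix.J (Fin n) ℝ *
          (LinearMap.toMatrix' ((fderiv ℝ φ x : (Fin n ⊕ Fin n → ℝ) →L[ℝ] Fin n ⊕ Fin n → ℝ) :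
            (Fin n ⊕ Fin n → ℝ) →ₗ[ℝ] Fin n ⊕ Fin n → ℝ)) = Matrix.J (Fin n) ℝ := by
  intro x
  have hα' : HasDerivAt (deriv α) (deriv (deriv α) (w ⬝ᵥ x)) (w ⬝ᵥ x) :=
    (hα.differentiable_deriv_two _).hasDerivAt
  rw [funext hφ, toMatrix'_fderiv_of_hasFDerivAt
    (hasFDerivAt_add_smul_ridge w _ x (hα'.const_mul h))]
  exact transpose_mul_J_mul_shear w _
end
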